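/- arXiv:1305.2465 — 3 statements merged into one kernel-verified Lean document; each statement's English description precedes it below -/
import Mathlib

section
/- Fix ε > 0. Every global solution of the stiff-spring (Duffing) system is periodic: if γ : ℝ → ℝ² satisfies γ₁'(t) = γ₂(t) and γ₂'(t) = −γ₁(t) − ε·γ₁(t)³ for all t ∈ ℝ, then there exists T > 0 such that γ(t + T) = γ(t) for all t ∈ ℝ. -/
/-!
While `p ≠ 0`, the angle `arctan (q / p)` has derivative `(p² + q² + ε q⁴) / (p² + q²) ≥ 1`
but stays in `(-π/2, π/2)`, so `p` vanishes in every time interval of length `π`.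
The system is reversible under `(q, p) ↦ (q, -p)`, so by uniqueness of solutions every solution
is symmetric about each time at which `p = 0`; the composite of the reflections about two such
times `t₁ < t₂` is the translation by `2 (t₂ - t₁)`.
-/

open Set Real

section Reversible

variable {E : Type*} [NormedAddCommGroup E] [NormedSpace ℝ E] {v : E → E} {f g : ℝ → E}

theorem ODE_solution_unique_univ_of_locallyLipschitz (hv : LocallyLipschitz v)
    (hf : ∀ t, HasDerivAt f (v (f t)) t) (hg : ∀ t, HasDerivAt g (v (g t)) t) {t₀ : ℝ}
    (heq : f t₀ = g t₀) : f = g := by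
  funext t
  obtain ⟨a, b, ht, ht₀⟩ : ∃ a b, t ∈ Ioo a b ∧ t₀ ∈ Ioo a b :=
    ⟨min t t₀ - 1, max t t₀ + 1, by grind⟩
  have hcont : ∀ h : ℝ → E, (∀ t, HasDerivAt h (v (h t)) t) → ContinuousOn h (Icc a b) :=
    fun h hh => HasDerivAt.continuousOn fun s _ => hh s
  set S := f '' Icc a b ∪ g '' Icc a b
  have hS : IsCompact S :=
    (isCompact_Icc.image_of_continuousOn (hcont f hf)).union
      (isCompact_Icc.image_of_continuousOn (hcont g hg))
  obtain ⟨K, hK⟩ := (hv.locallyLipschitzOn (s := S)).exists_lipschitzOnWith_of_compact hS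
  exact ODE_solution_unique_of_mem_Icc (fun _ _ => hK) ht₀ (hcont f hf) (fun s _ => hf s)
    (fun s hs => .inl ⟨s, Ioo_subset_Icc_self hs, rfl⟩) (hcont g hg) (fun s _ => hg s)
    (fun s hs => .inr ⟨s, Ioo_subset_Icc_self hs, rfl⟩) heq (Ioo_subset_Icc_self ht)

theorem hasDerivAt_comp_const_sub_of_reversing {σ : E →L[ℝ] E} (hσ : ∀ x, v (σ x) = -σ (v x))
    (hf : ∀ t, HasDerivAt f (v (f t)) t) (c t : ℝ) :
    HasDerivAt (fun s => σ (f (c - s))) (v (σ (f (c - t)))) t := by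
  have := σ.hasFDerivAt.comp_hasDerivAt t ((hf (c - t)).scomp t ((hasDerivAt_id t).const_sub c))
  rw [hσ]
  simpa [Function.comp_def] using this

theorem periodic_of_isFixedPt_of_reversing (hv : LocallyLipschitz v) {σ : E →L[ℝ] E}
    (hσ : ∀ x, v (σ x) = -σ (v x)) (hf : ∀ t, HasDerivAt f (v (f t)) t) {t₁ t₂ : ℝ}
    (h₁ : Function.IsFixedPt σ (f t₁)) (h₂ : Function.IsFixedPt σ (f t₂)) :
    Function.Periodic f (2 * (t₂ - t₁)) := by
  have reflect : ∀ c, Function.IsFixedPt σ (f c) → ∀ t, f t = σ (f (2 * c - t)) := by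
    intro c hc
    refine congrFun (ODE_solution_unique_univ_of_locallyLipschitz hv hf
      (hasDerivAt_comp_const_sub_of_reversing hσ hf (2 * c)) (t₀ := c) ?_)
    rw [two_mul, add_sub_cancel_right, hc]
  intro t
  rw [reflect t₂ h₂, reflect t₁ h₁ t]
  congr 2
  ring

end Reversible

section Restoring

variable {F q p : ℝ → ℝ}

theorem hasDerivAt_arctan_div_of_restoring {t : ℝ} (hq : HasDerivAt q (p t) t)
    (hp : HasDerivAt p (-F (q t)) t) (hpt : p t ≠ 0) :
    HasDerivAt (fun s => arctan (q s / p s))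
      ((p t ^ 2 + q t * F (q t)) / (p t ^ 2 + q t ^ 2)) t := by
  refine ((hq.div hp hpt).arctan).congr_deriv ?_
  simp only [Pi.div_apply]
  field_simp
  ring

theorem exists_mem_Icc_eq_zero_of_restoring (hF : ∀ x, x ^ 2 ≤ x * F x)
    (hq : ∀ t, HasDerivAt q (p t) t) (hp : ∀ t, HasDerivAt p (-F (q t)) t) (a : ℝ) :
    ∃ t ∈ Icc a (a + π), p t = 0 := by
  by_contra! hne
  have hderiv := fun t (ht : t ∈ Icc a (a + π)) =>
    hasDerivAt_arctan_div_of_restoring (hq t) (hp t) (hne t ht)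
  obtain ⟨c, hc, hslope⟩ := exists_hasDerivAt_eq_slope (fun s => arctan (q s / p s)) _
    (by linarith [pi_pos]) (HasDerivAt.continuousOn hderiv)
    (fun t ht => hderiv t (Ioo_subset_Icc_self ht))
  have hpc := hne c (Ioo_subset_Icc_self hc)
  have one_le : 1 ≤ (p c ^ 2 + q c * F (q c)) / (p c ^ 2 + q c ^ 2) :=
    (one_le_div (by positivity)).mpr (by linarith [hF (q c)])
  rw [hslope, add_sub_cancel_left, one_le_div pi_pos] at one_le
  linarith [arctan_lt_pi_div_two (q (a + π) / p (a + π)), neg_pi_div_two_lt_arctan (q a / p a)]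

end Restoring

def duffingField (ε : ℝ) (x : ℝ × ℝ) : ℝ × ℝ := (x.2, -x.1 - ε * x.1 ^ 3)

def momentumReflection : ℝ × ℝ →L[ℝ] ℝ × ℝ :=
  (ContinuousLinearMap.id ℝ ℝ).prodMap (-ContinuousLinearMap.id ℝ ℝ)

theorem momentumReflection_apply (x : ℝ × ℝ) : momentumReflection x = (x.1, -x.2) := rfl

theorem locallyLipschitz_duffingField (ε : ℝ) : LocallyLipschitz (duffingField ε) :=
  ContDiff.locallyLipschitz (𝕂 := ℝ) (by unfold duffingField; fun_prop)

theorem duffingField_momentumReflection (ε : ℝ) (x : ℝ × ℝ) :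
    duffingField ε (momentumReflection x) = -momentumReflection (duffingField ε x) := by
  simp only [duffingField, momentumReflection_apply, Prod.neg_mk, neg_neg]

theorem isFixedPt_momentumReflection_iff {x : ℝ × ℝ} :
    Function.IsFixedPt momentumReflection x ↔ x.2 = 0 := by
  simp [Function.IsFixedPt, momentumReflection_apply, Prod.ext_iff, neg_eq_self]

/-- Every global solution of the stiff-spring (Duffing) system
`q' = p`, `p' = −q − ε q³` with `ε > 0` is periodic. -/
theorem stiff_spring_solutions_periodic (ε : ℝ) (hε : 0 < ε)
    (γ : ℝ → ℝ × ℝ)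
    (h₁ : ∀ t : ℝ, HasDerivAt (fun s => (γ s).1) ((γ t).2) t)
    (h₂ : ∀ t : ℝ, HasDerivAt (fun s => (γ s).2) (-(γ t).1 - ε * (γ t).1 ^ 3) t) :
    ∃ T : ℝ, 0 < T ∧ ∀ t : ℝ, γ (t + T) = γ t := by
  have hγ : ∀ t, HasDerivAt γ (duffingField ε (γ t)) t := fun t => (h₁ t).prodMk (h₂ t)
  have restoring (x : ℝ) : x ^ 2 ≤ x * (x + ε * x ^ 3) := by
    nlinarith [mul_nonneg hε.le (pow_two_nonneg (x ^ 2))]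
  have hp (t : ℝ) : HasDerivAt (fun s => (γ s).2) (-((γ t).1 + ε * (γ t).1 ^ 3)) t :=
    (h₂ t).congr_deriv (by ring)
  obtain ⟨t₁, -, ht₁⟩ := exists_mem_Icc_eq_zero_of_restoring restoring h₁ hp 0
  obtain ⟨t₂, ht₂, ht₂'⟩ := exists_mem_Icc_eq_zero_of_restoring restoring h₁ hp (t₁ + 1)
  exact ⟨2 * (t₂ - t₁), by linarith [ht₂.1],
    periodic_of_isFixedPt_of_reversing (locallyLipschitz_duffingField ε)
      (duffingField_momentumReflection ε) hγ (isFixedPt_momentumReflection_iff.mpr ht₁)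
      (isFixedPt_momentumReflection_iff.mpr ht₂')⟩
end

section
/- The ℝ-action on the plane generated by the vector field X = sin x ∂x + cos x ∂y is free: if γ : ℝ → ℝ² satisfies γ'(t) = (sin γ₁(t), cos γ₁(t)) for all t ∈ ℝ, and γ(T) = γ(0) for some T ∈ ℝ, then T = 0. -/
/-!
Along an integral curve `(x, y)` of `X`, `cos x` has derivative `-sin² x ≤ 0`, so it is
antitone. If the curve returned to its starting point after time `T ≠ 0`, `cos x` would be
constant on the interval in between, forcing `sin x = 0` there; but by Rolle's theorem
applied to `y`, `cos x` must also vanish somewhere in that interval.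
-/

open Real Set

theorem Antitone.eqOn_Icc_of_eq {α β : Type*} [Preorder α] [PartialOrder β] {f : α → β}
    {a b : α} (hf : Antitone f) (hab : f a = f b) : EqOn f (fun _ => f a) (Icc a b) :=
  fun _ ht => le_antisymm (hf ht.1) (hab ▸ hf ht.2)

theorem Antitone.hasDerivAt_eq_zero_of_eq {f : ℝ → ℝ} {f' a b c : ℝ} (hf : Antitone f)
    (hab : f a = f b) (hc : c ∈ Ioo a b) (hderiv : HasDerivAt f f' c) : f' = 0 := by
  have hconst : ∀ᶠ t in nhds c, f t = f a :=
    Filter.mem_of_superset (isOpen_Ioo.mem_nhds hc)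
      fun _ ht => hf.eqOn_Icc_of_eq hab (Ioo_subset_Icc_self ht)
  have hmin : IsLocalMin f c :=
    hconst.mono fun t ht => by rw [ht, hf.eqOn_Icc_of_eq hab (Ioo_subset_Icc_self hc)]
  exact hmin.hasDerivAt_eq_zero hderiv

section SinFlow

variable {x : ℝ → ℝ} (hx : ∀ t, HasDerivAt x (sin (x t)) t)
include hx

theorem hasDerivAt_cos_comp_of_hasDerivAt_sin (t : ℝ) :
    HasDerivAt (fun s => cos (x s)) (-sin (x t) ^ 2) t := by
  simpa [sq] using (hx t).cos

theorem antitone_cos_comp_of_hasDerivAt_sin : Antitone fun t => cos (x t) :=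
  antitone_of_hasDerivAt_nonpos (hasDerivAt_cos_comp_of_hasDerivAt_sin hx)
    fun _ => neg_nonpos.2 (sq_nonneg _)

theorem sin_eq_zero_of_cos_eq {a b c : ℝ} (hab : cos (x a) = cos (x b)) (hc : c ∈ Ioo a b) :
    sin (x c) = 0 :=
  pow_eq_zero_iff two_ne_zero |>.1 <| neg_eq_zero.1 <|
    (antitone_cos_comp_of_hasDerivAt_sin hx).hasDerivAt_eq_zero_of_eq hab hc
      (hasDerivAt_cos_comp_of_hasDerivAt_sin hx c)

end SinFlow

theorem injective_of_hasDerivAt_sin_cos {γ : ℝ → ℝ × ℝ}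
    (hγ : ∀ t, HasDerivAt γ (sin (γ t).1, cos (γ t).1) t) : Function.Injective γ := by
  refine .of_lt_imp_ne fun a b hab hγab => ?_
  have hx (t : ℝ) : HasDerivAt (fun s => (γ s).1) (sin (γ t).1) t := (hγ t).fst
  have hy (t : ℝ) : HasDerivAt (fun s => (γ s).2) (cos (γ t).1) t := (hγ t).snd
  obtain ⟨c, hc, hcos⟩ := exists_hasDerivAt_eq_zero hab
    (fun t _ => (hy t).continuousAt.continuousWithinAt) (congrArg Prod.snd hγab)
    fun t _ => hy t
  have hsin : sin (γ c).1 = 0 := sin_eq_zero_of_cos_eq hx (by rw [hγab]) hc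
  simpa [hsin, hcos] using sin_sq_add_cos_sq (γ c).1

/-- The `ℝ`-action on the plane generated by the vector field
`X = sin x ∂x + cos x ∂y` is free: if `γ` is an integral curve of `X`
and `γ T = γ 0`, then `T = 0`. -/
theorem flow_sin_cos_free
    (γ : ℝ → ℝ × ℝ)
    (hγ : ∀ t : ℝ, HasDerivAt γ (Real.sin (γ t).1, Real.cos (γ t).1) t)
    (T : ℝ) (hT : γ T = γ 0) :
    T = 0 :=
  injective_of_hasDerivAt_sin_cos hγ hT
end

section
/- Let f : ℝ² → ℝ be continuous, 2π-periodic in each variable (f(x + 2π, y) = f(x, y) and f(x, y + 2π) = f(x, y) for all (x,y)), and invariant under the flow of the vector field X = sin x ∂x + cos x ∂y, in the sense that for every curve γ : ℝ → ℝ² with γ'(t) = (sin γ₁(t), cos γ₁(t)) for all t, the function t ↦ f(γ(t)) is constant. Then f(0,0) = f(π,0). (Hence an invariant function defined on the two exceptional circles of the induced torus flow, taking distinct values on them, does not extend to an invariant function on the whole torus.) -/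
/-!
The curve `t ↦ (2 arctan eᵗ, -log cosh t)` is an integral curve of `X`: its first coordinate
tends to `π` as `t → ∞` and to `0` as `t → -∞`, while its second coordinate tends to `-∞` at
both ends. By the intermediate value theorem the second coordinate passes through `-2πn` at
arbitrarily large (resp. small) times, where by periodicity `f` takes its value at height `0`;
continuity of `f` then gives that `f (π, 0)` and `f (0, 0)` are both the constant value of `f`
along the curve.
-/

open Real Filter Topology Function

lemma Real.sin_two_mul_arctan (u : ℝ) : sin (2 * arctan u) = 2 * u / (1 + u ^ 2) := by
  have hs : √(1 + u ^ 2) ^ 2 = 1 + u ^ 2 := sq_sqrt (by positivity)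
  have hs0 : √(1 + u ^ 2) ≠ 0 := by positivity
  rw [sin_two_mul, sin_arctan, cos_arctan]
  field_simp
  rw [hs]

lemma Real.cos_two_mul_arctan (u : ℝ) : cos (2 * arctan u) = (1 - u ^ 2) / (1 + u ^ 2) := by
  have hs : √(1 + u ^ 2) ^ 2 = 1 + u ^ 2 := sq_sqrt (by positivity)
  rw [cos_two_mul, cos_arctan, div_pow, hs]
  field_simp
  ring

lemma frequently_atTop_eq_sub_nat_mul {y : ℝ → ℝ} (hy : Continuous y)
    (hlim : Tendsto y atTop atBot) (v : ℝ) {p : ℝ} (hp : 0 < p) :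
    ∃ᶠ t in atTop, ∃ n : ℕ, y t = v - n * p := by
  rw [frequently_atTop]
  intro a
  obtain ⟨n, hn⟩ := Archimedean.arch (v - y a) hp
  rw [nsmul_eq_mul] at hn
  obtain ⟨b, hab, hb⟩ :=
    ((eventually_ge_atTop a).and (hlim.eventually_le_atBot (v - n * p))).exists
  obtain ⟨t, ⟨hat, -⟩, ht⟩ :=
    intermediate_value_Icc' hab hy.continuousOn ⟨hb, by linarith⟩
  exact ⟨t, hat, n, ht⟩

lemma apply_eq_of_tendsto_of_periodic {f : ℝ × ℝ → ℝ} (hf : Continuous f) {p : ℝ}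
    (hp : 0 < p) (hper : ∀ x, Periodic (fun y => f (x, y)) p) {x y : ℝ → ℝ} (hy : Continuous y)
    {c : ℝ} (hconst : ∀ t, f (x t, y t) = c) {a : ℝ} (hxa : Tendsto x atTop (𝓝 a))
    (hybot : Tendsto y atTop atBot) (v : ℝ) : f (a, v) = c := by
  have hlim : Tendsto (fun t => f (x t, v)) atTop (𝓝 (f (a, v))) :=
    (hf.tendsto _).comp (hxa.prodMk_nhds tendsto_const_nhds)
  refine tendsto_nhds_unique_of_frequently_eq hlim tendsto_const_nhds ?_
  refine (frequently_atTop_eq_sub_nat_mul hy hybot v hp).mono ?_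
  rintro t ⟨n, hn⟩
  rw [← hconst t, hn]
  exact ((hper (x t)).sub_nat_mul_eq n).symm

noncomputable def heteroclinicCurve (t : ℝ) : ℝ × ℝ :=
  (2 * arctan (exp t), -log (cosh t))

lemma hasDerivAt_heteroclinicCurve (t : ℝ) :
    HasDerivAt heteroclinicCurve (sin (heteroclinicCurve t).1, cos (heteroclinicCurve t).1) t := by
  have hx : HasDerivAt (fun t => 2 * arctan (exp t)) (2 * (1 / (1 + exp t ^ 2) * exp t)) t :=
    ((hasDerivAt_arctan _).comp t (hasDerivAt_exp t)).const_mul 2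
  have hy : HasDerivAt (fun t => -log (cosh t)) (-(sinh t / cosh t)) t :=
    ((hasDerivAt_cosh t).log (cosh_pos t).ne').neg
  refine (hx.prodMk hy).congr_deriv ?_
  have he : exp t ≠ 0 := exp_ne_zero t
  simp only [heteroclinicCurve, sin_two_mul_arctan, cos_two_mul_arctan, Prod.mk.injEq]
  refine ⟨by ring, ?_⟩
  rw [cosh_eq, sinh_eq, exp_neg]
  field_simp
  ring

lemma continuous_heteroclinicCurve : Continuous heteroclinicCurve :=
  continuous_iff_continuousAt.2 fun t => (hasDerivAt_heteroclinicCurve t).continuousAt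

lemma tendsto_heteroclinicCurve_fst_atTop :
    Tendsto (fun t => (heteroclinicCurve t).1) atTop (𝓝 π) := by
  have h :=
    ((tendsto_arctan_atTop.mono_right nhdsWithin_le_nhds).comp tendsto_exp_atTop).const_mul 2
  rwa [mul_div_cancel₀ π two_ne_zero] at h

lemma tendsto_heteroclinicCurve_fst_atBot :
    Tendsto (fun t => (heteroclinicCurve t).1) atBot (𝓝 0) := by
  have h := ((continuous_arctan.tendsto 0).comp tendsto_exp_atBot).const_mul 2
  rwa [arctan_zero, mul_zero] at h

lemma tendsto_heteroclinicCurve_snd_atTop :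
    Tendsto (fun t => (heteroclinicCurve t).2) atTop atBot := by
  have hcosh : Tendsto cosh atTop atTop :=
    tendsto_atTop_mono (fun t => by rw [cosh_eq]; linarith [exp_pos (-t)])
      (tendsto_exp_atTop.atTop_div_const two_pos)
  exact tendsto_neg_atTop_atBot.comp (tendsto_log_atTop.comp hcosh)

theorem invariant_function_equal_on_exceptional_circles_general
    (f : ℝ × ℝ → ℝ) (hf : Continuous f)
    (hpery : ∀ x y : ℝ, f (x, y + 2 * Real.pi) = f (x, y))
    (hinv : ∀ γ : ℝ → ℝ × ℝ,
      (∀ t : ℝ, HasDerivAt γ (Real.sin (γ t).1, Real.cos (γ t).1) t) →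
      ∀ s t : ℝ, f (γ s) = f (γ t)) :
    f (0, 0) = f (Real.pi, 0) := by
  have hconst (t : ℝ) : f (heteroclinicCurve t) = f (heteroclinicCurve 0) :=
    hinv heteroclinicCurve hasDerivAt_heteroclinicCurve t 0
  have hper (x : ℝ) : Periodic (fun y => f (x, y)) (2 * π) := hpery x
  have hy : Continuous fun t => (heteroclinicCurve t).2 := continuous_heteroclinicCurve.snd
  have hpi : f (π, 0) = f (heteroclinicCurve 0) :=
    apply_eq_of_tendsto_of_periodic hf two_pi_pos hper hy hconst
      tendsto_heteroclinicCurve_fst_atTop tendsto_heteroclinicCurve_snd_atTop 0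
  -- Run the curve backwards; `cosh` is even, so the second coordinate is unchanged.
  have hzero : f (0, 0) = f (heteroclinicCurve 0) :=
    apply_eq_of_tendsto_of_periodic hf two_pi_pos hper (y := fun t => (heteroclinicCurve t).2)
      (x := fun t => (heteroclinicCurve (-t)).1) hy
      (fun t => by simpa only [heteroclinicCurve, cosh_neg] using hconst (-t))
      (tendsto_heteroclinicCurve_fst_atBot.comp tendsto_neg_atTop_atBot)
      tendsto_heteroclinicCurve_snd_atTop 0
  rw [hpi, hzero]

/-- Let `f : ℝ² → ℝ` be continuous, `2π`-periodic in each variable, and invariant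
under the flow of the vector field `X = sin x ∂x + cos x ∂y` (that is, `f` is constant
along every integral curve of `X`).  Then `f (0, 0) = f (π, 0)`. -/
theorem invariant_function_equal_on_exceptional_circles
    (f : ℝ × ℝ → ℝ) (hf : Continuous f)
    (hperx : ∀ x y : ℝ, f (x + 2 * Real.pi, y) = f (x, y))
    (hpery : ∀ x y : ℝ, f (x, y + 2 * Real.pi) = f (x, y))
    (hinv : ∀ γ : ℝ → ℝ × ℝ,
      (∀ t : ℝ, HasDerivAt γ (Real.sin (γ t).1, Real.cos (γ t).1) t) →
      ∀ s t : ℝ, f (γ s) = f (γ t)) :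
    f (0, 0) = f (Real.pi, 0) :=
  invariant_function_equal_on_exceptional_circles_general f hf hpery hinv
end
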